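/- For a positive semidefinite operator A on a bipartite Hilbert space H_A ⊗ H_B, and a projection P on H_A, the support of the partial trace Tr_B(A) is contained in range(P) if and only if the support of A is contained in range(P ⊗ I_B). -/

import Mathlib

open Matrix Kronecker
open scoped ComplexOrder

/-- A projection: a self-adjoint idempotent matrix. -/
def IsProjection {I : Type*} [Fintype I] [DecidableEq I]
    (P : Matrix I I ℂ) : Prop :=
  P * P = P ∧ Pᴴ = P

/-- The partial trace over the second factor `H_B`. -/
noncomputable def ptrB {a b : ℕ} (A : Matrix (Fin a × Fin b) (Fin a × Fin b) ℂ) :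
    Matrix (Fin a) (Fin a) ℂ :=
  fun i j => ∑ k : Fin b, A (i, k) (j, k)

/-! If `S := (1 - P) ⊗ I`, the hypothesis `(1 - P) Tr_B A = 0` gives `Tr_B (S A Sᴴ) = 0`, hence
`tr ((B Sᴴ)ᴴ (B Sᴴ)) = tr (S A Sᴴ) = 0` for a square root `A = Bᴴ B`. So `B Sᴴ = 0`, whence
`S A = 0`, i.e. `(P ⊗ I) A = A`. The converse is `Tr_B ((P ⊗ I) A) = P Tr_B A`. -/

namespace Matrix

theorem mulVec_eq_self_of_mem_range_iff {n α : Type*} [Fintype n] [DecidableEq n] [Semiring α]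
    (P M : Matrix n n α) :
    (∀ v : n → α, (∃ w, M *ᵥ w = v) → P *ᵥ v = v) ↔ P * M = M := by
  refine ⟨fun h => ?_, fun h v ⟨w, hw⟩ => by rw [← hw, mulVec_mulVec, h]⟩
  ext i j
  have hcol := congrFun (h _ ⟨Pi.single j 1, rfl⟩) i
  rw [mulVec_mulVec] at hcol
  simpa [mulVec_single] using hcol

theorem PosSemidef.mul_eq_zero_of_trace_mul_mul_conjTranspose_eq_zero {m n 𝕜 : Type*}
    [Fintype m] [Fintype n] [RCLike 𝕜] {A : Matrix n n 𝕜} (hA : A.PosSemidef) (S : Matrix m n 𝕜)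
    (h : (S * A * Sᴴ).trace = 0) : S * A = 0 := by
  classical
  open scoped MatrixOrder in
  obtain ⟨B, rfl⟩ := CStarAlgebra.nonneg_iff_eq_star_mul_self.mp hA.nonneg
  have hBS : B * Sᴴ = 0 := by
    rw [← trace_conjTranspose_mul_self_eq_zero_iff, ← h, conjTranspose_mul,
      conjTranspose_conjTranspose, star_eq_conjTranspose]
    simp only [Matrix.mul_assoc]
  rw [star_eq_conjTranspose, ← Matrix.mul_assoc, ← conjTranspose_conjTranspose S,
    ← conjTranspose_mul, hBS, conjTranspose_zero, Matrix.zero_mul]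

end Matrix

section PartialTrace

variable {a b : ℕ}

theorem trace_ptrB (A : Matrix (Fin a × Fin b) (Fin a × Fin b) ℂ) :
    (ptrB A).trace = A.trace := by
  simp only [trace, diag, ptrB, Fintype.sum_prod_type]

theorem ptrB_kronecker_one_mul (X : Matrix (Fin a) (Fin a) ℂ)
    (A : Matrix (Fin a × Fin b) (Fin a × Fin b) ℂ) :
    ptrB ((X ⊗ₖ (1 : Matrix (Fin b) (Fin b) ℂ)) * A) = X * ptrB A := by
  ext i j
  simp only [ptrB, mul_apply, kroneckerMap_apply, Fintype.sum_prod_type, one_apply,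
    mul_ite, mul_one, mul_zero, ite_mul, zero_mul, Finset.mul_sum]
  rw [Finset.sum_comm]
  refine Finset.sum_congr rfl fun m _ => ?_
  rw [Finset.sum_comm]
  simp

theorem ptrB_mul_kronecker_one (A : Matrix (Fin a × Fin b) (Fin a × Fin b) ℂ)
    (Y : Matrix (Fin a) (Fin a) ℂ) :
    ptrB (A * (Y ⊗ₖ (1 : Matrix (Fin b) (Fin b) ℂ))) = ptrB A * Y := by
  ext i j
  simp only [ptrB, mul_apply, kroneckerMap_apply, Fintype.sum_prod_type, one_apply,
    mul_ite, mul_one, mul_zero, Finset.sum_mul]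
  rw [Finset.sum_comm]
  refine Finset.sum_congr rfl fun m _ => ?_
  rw [Finset.sum_comm]
  simp

end PartialTrace

theorem supp_partialTrace_subset_iff_general {a b : ℕ}
    (A : Matrix (Fin a × Fin b) (Fin a × Fin b) ℂ) (hA : A.PosSemidef)
    (P : Matrix (Fin a) (Fin a) ℂ) :
    (∀ v : Fin a → ℂ, (∃ w, ptrB A *ᵥ w = v) → P *ᵥ v = v) ↔
      (∀ v : Fin a × Fin b → ℂ, (∃ w, A *ᵥ w = v) →
        (P ⊗ₖ (1 : Matrix (Fin b) (Fin b) ℂ)) *ᵥ v = v) := by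
  rw [mulVec_eq_self_of_mem_range_iff, mulVec_eq_self_of_mem_range_iff]
  refine ⟨fun h => ?_, fun h => by simpa only [ptrB_kronecker_one_mul] using congrArg ptrB h⟩
  have hS : (1 - P) ⊗ₖ (1 : Matrix (Fin b) (Fin b) ℂ) = 1 - P ⊗ₖ 1 := by
    rw [eq_sub_iff_add_eq, ← add_kronecker, sub_add_cancel, one_kronecker_one]
  have hkill : (1 - P) * ptrB A = 0 := by rw [Matrix.sub_mul, h, Matrix.one_mul, sub_self]
  have hSA := hA.mul_eq_zero_of_trace_mul_mul_conjTranspose_eq_zero ((1 - P) ⊗ₖ 1) <| by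
    rw [← trace_ptrB, conjTranspose_kronecker, conjTranspose_one, ptrB_mul_kronecker_one,
      ptrB_kronecker_one_mul, hkill, Matrix.zero_mul, trace_zero]
  rwa [hS, Matrix.sub_mul, Matrix.one_mul, sub_eq_zero, eq_comm] at hSA

/-- For positive semidefinite `A` on `H_A ⊗ H_B` and a projection `P` on `H_A`,
`supp(Tr_B A) ⊆ range P` iff `supp A ⊆ range (P ⊗ I_B)`. -/
theorem supp_partialTrace_subset_iff {a b : ℕ}
    (A : Matrix (Fin a × Fin b) (Fin a × Fin b) ℂ) (hA : A.PosSemidef)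
    (P : Matrix (Fin a) (Fin a) ℂ) (hP : IsProjection P) :
    (∀ v : Fin a → ℂ, (∃ w, ptrB A *ᵥ w = v) → P *ᵥ v = v) ↔
      (∀ v : Fin a × Fin b → ℂ, (∃ w, A *ᵥ w = v) →
        (P ⊗ₖ (1 : Matrix (Fin b) (Fin b) ℂ)) *ᵥ v = v) :=
  supp_partialTrace_subset_iff_general A hA P
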